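/- arXiv:1610.09701 — 2 statements merged into one kernel-verified Lean document; each statement's English description precedes it below -/
import Mathlib

section
/- Let m ≥ 3 be an integer. There exists a constant C_m > 0 such that for all x, y, y' ∈ ℝ² with y ≠ 0, |y| ≥ 2|x|, |y'| ≥ 2|x|, |y| ≤ |y'|, and |y − y'| ≥ |x|, the m-fold symmetrized Biot–Savart kernel K^{(m)}(x,y) := (1/m) Σ_{i=1}^{m} K(x − O_{2πi/m} y) satisfies |K^{(m)}(x,y) − K^{(m)}(x,y')| ≤ C_m · |y − y'| · |x|^{m−1} / |y|^{m+1}. -/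
/-!
Identify `ℝ²` with `ℂ` by `(a, b) ↦ a + b i`. Then `K(z) = (i / 2π) · conj (1 / z)`, and the rotation
by `2πi/m` is multiplication by `ζ ^ i` for the primitive `m`-th root of unity `ζ = exp (2πi/m)`.
Expanding the logarithmic derivative of `X ^ m - b ^ m = ∏ (X - ζ ^ i b)` in partial fractions gives
`Σ_i 1 / (a - ζ ^ i b) = m a ^ (m-1) / (a ^ m - b ^ m)`, so
`K^{(m)}(x, y) = (i / 2π) · conj (a ^ (m-1) / (a ^ m - b ^ m))` with `a, b` the complex forms of `x, y`.
The difference of two such quotients is `a ^ (m-1) (b ^ m - b' ^ m) / ((a ^ m - b ^ m) (a ^ m - b' ^ m))`;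
its numerator is at most `m |b - b'| |b'| ^ (m-1)` and, as `|a| ≤ |b| / 2`, each factor of the
denominator is at least `|b| ^ m / 2` resp. `|b'| ^ m / 2`. This gives the bound with `C_m = 2m / π`.
-/

open Real
open scoped BigOperators

noncomputable section

/-- The point of `ℝ²` with coordinates `(a, b)`. -/
def mk2 (a b : ℝ) : EuclideanSpace ℝ (Fin 2) := (WithLp.equiv 2 (Fin 2 → ℝ)).symm ![a, b]

/-- Counterclockwise rotation of `ℝ²` by the angle `β`. -/
def rot (β : ℝ) (y : EuclideanSpace ℝ (Fin 2)) : EuclideanSpace ℝ (Fin 2) :=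
  mk2 (Real.cos β * y 0 - Real.sin β * y 1) (Real.sin β * y 0 + Real.cos β * y 1)

/-- The 2D Biot–Savart kernel `K(z) = (1/2π) z^⊥ / |z|²`. -/
def BSKernel (z : EuclideanSpace ℝ (Fin 2)) : EuclideanSpace ℝ (Fin 2) :=
  (2 * Real.pi * ‖z‖ ^ 2)⁻¹ • mk2 (-(z 1)) (z 0)

/-- The `m`-fold symmetrized Biot–Savart kernel
`K^{(m)}(x,y) = (1/m) Σ_{i=1}^m K(x − O_{2πi/m} y)`. -/
def symKernel (m : ℕ) (x y : EuclideanSpace ℝ (Fin 2)) : EuclideanSpace ℝ (Fin 2) :=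
  (m : ℝ)⁻¹ • ∑ i ∈ Finset.Icc 1 m, BSKernel (x - rot (2 * Real.pi * i / m) y)

open Finset ComplexConjugate

theorem sum_Icc_one_eq_sum_range {M : Type*} [AddCommMonoid M] {g : ℕ → M} {m : ℕ}
    (h : g m = g 0) : ∑ i ∈ Icc 1 m, g i = ∑ i ∈ range m, g i := by
  rcases m with _ | n
  · rfl
  rw [← Ico_add_one_right_eq_Icc, sum_Ico_eq_sum_range, Nat.add_sub_cancel, sum_range_succ,
    sum_range_succ' g, add_comm 1 n, h]
  simp only [add_comm 1]

open Polynomial in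
theorem IsPrimitiveRoot.sum_inv_sub_pow_mul {K : Type*} [Field K] {ζ : K} {m : ℕ}
    (hζ : IsPrimitiveRoot ζ m) {a b : K} (hab : a ^ m ≠ b ^ m) :
    ∑ i ∈ range m, (a - ζ ^ i * b)⁻¹ = m * a ^ (m - 1) / (a ^ m - b ^ m) := by
  have hroots : (X ^ m - C (b ^ m)).roots = (range m).val.map (ζ ^ · * b) :=
    hζ.nthRoots_eq rfl
  have hlogDeriv :=
    (X_pow_sub_C_splits_of_isPrimitiveRoot hζ rfl).eval_derivative_div_eval_of_ne_zero
      (x := a) (by simpa [sub_eq_zero] using hab)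
  simp only [hroots, Multiset.map_map] at hlogDeriv
  simpa [one_div, derivative_X_pow, -map_pow, sum_eq_multiset_sum] using hlogDeriv.symm

theorem norm_pow_sub_pow_le_of_norm_le {R : Type*} [SeminormedCommRing R] [NormOneClass R]
    {b b' : R} (h : ‖b‖ ≤ ‖b'‖) (m : ℕ) :
    ‖b ^ m - b' ^ m‖ ≤ m * ‖b - b'‖ * ‖b'‖ ^ (m - 1) := by
  have hterm : ∀ i ∈ range m, ‖b ^ i * b' ^ (m - 1 - i)‖ ≤ ‖b'‖ ^ (m - 1) := fun i hi =>
    calc ‖b ^ i * b' ^ (m - 1 - i)‖ ≤ ‖b‖ ^ i * ‖b'‖ ^ (m - 1 - i) :=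
          (norm_mul_le _ _).trans (mul_le_mul (norm_pow_le _ _) (norm_pow_le _ _)
            (norm_nonneg _) (by positivity))
      _ ≤ ‖b'‖ ^ i * ‖b'‖ ^ (m - 1 - i) := by gcongr
      _ = ‖b'‖ ^ (m - 1) := by rw [← pow_add]; congr 1; grind
  calc ‖b ^ m - b' ^ m‖ ≤ ‖∑ i ∈ range m, b ^ i * b' ^ (m - 1 - i)‖ * ‖b - b'‖ := by
        rw [← geom_sum₂_mul]; exact norm_mul_le _ _
    _ ≤ (∑ _i ∈ range m, ‖b'‖ ^ (m - 1)) * ‖b - b'‖ := by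
        gcongr; exact (norm_sum_le _ _).trans (sum_le_sum hterm)
    _ = m * ‖b - b'‖ * ‖b'‖ ^ (m - 1) := by simp only [sum_const, card_range, nsmul_eq_mul]; ring

theorem half_norm_pow_le_norm_sub_pow {𝕜 : Type*} [NormedDivisionRing 𝕜] {a b : 𝕜}
    (hab : 2 * ‖a‖ ≤ ‖b‖) {m : ℕ} (hm : 0 < m) :
    ‖b‖ ^ m / 2 ≤ ‖a ^ m - b ^ m‖ := by
  have hpow : ‖a‖ ^ m ≤ ‖b‖ ^ m / 2 :=
    calc ‖a‖ ^ m ≤ (‖b‖ / 2) ^ m := by gcongr; linarith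
      _ = ‖b‖ ^ m / 2 ^ m := div_pow _ _ _
      _ ≤ ‖b‖ ^ m / 2 := by gcongr; exact le_self_pow₀ one_le_two hm.ne'
  have := norm_sub_norm_le (b ^ m) (a ^ m)
  rw [norm_sub_rev, norm_pow, norm_pow] at this
  linarith

theorem norm_pow_div_sub_pow_sub_le {𝕜 : Type*} [NormedField 𝕜] {m : ℕ} (hm : 0 < m)
    {a b b' : 𝕜} (hb : b ≠ 0) (hab : 2 * ‖a‖ ≤ ‖b‖) (hbb' : ‖b‖ ≤ ‖b'‖) :
    ‖a ^ (m - 1) / (a ^ m - b ^ m) - a ^ (m - 1) / (a ^ m - b' ^ m)‖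
      ≤ 4 * m * ‖b - b'‖ * ‖a‖ ^ (m - 1) / ‖b‖ ^ (m + 1) := by
  have hb0 : 0 < ‖b‖ := norm_pos_iff.mpr hb
  have hb'0 : 0 < ‖b'‖ := hb0.trans_le hbb'
  have hden := half_norm_pow_le_norm_sub_pow hab hm
  have hden' := half_norm_pow_le_norm_sub_pow (hab.trans hbb') hm
  have hD : a ^ m - b ^ m ≠ 0 := norm_pos_iff.mp (lt_of_lt_of_le (by positivity) hden)
  have hD' : a ^ m - b' ^ m ≠ 0 := norm_pos_iff.mp (lt_of_lt_of_le (by positivity) hden')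
  have hdiff : a ^ (m - 1) / (a ^ m - b ^ m) - a ^ (m - 1) / (a ^ m - b' ^ m)
      = a ^ (m - 1) * (b ^ m - b' ^ m) / ((a ^ m - b ^ m) * (a ^ m - b' ^ m)) := by
    field_simp
    ring
  have hb'pow : ‖b'‖ ^ m = ‖b'‖ ^ (m - 1) * ‖b'‖ := by
    rw [← pow_succ, Nat.sub_add_cancel hm]
  rw [hdiff, norm_div, norm_mul, norm_mul, norm_pow]
  calc ‖a‖ ^ (m - 1) * ‖b ^ m - b' ^ m‖ / (‖a ^ m - b ^ m‖ * ‖a ^ m - b' ^ m‖)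
      ≤ ‖a‖ ^ (m - 1) * (m * ‖b - b'‖ * ‖b'‖ ^ (m - 1)) / (‖b‖ ^ m / 2 * (‖b'‖ ^ m / 2)) := by
        gcongr
        exact norm_pow_sub_pow_le_of_norm_le hbb' m
    _ = 4 * m * ‖b - b'‖ * ‖a‖ ^ (m - 1) / (‖b‖ ^ m * ‖b'‖) := by
        rw [hb'pow]; field_simp; ring
    _ ≤ 4 * m * ‖b - b'‖ * ‖a‖ ^ (m - 1) / ‖b‖ ^ (m + 1) := by
        rw [pow_succ]; gcongr

def toComplex : EuclideanSpace ℝ (Fin 2) ≃ₗᵢ[ℝ] ℂ := Complex.orthonormalBasisOneI.repr.symm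

theorem toComplex_apply (z : EuclideanSpace ℝ (Fin 2)) : toComplex z = z 0 + z 1 * Complex.I :=
  Complex.orthonormalBasisOneI_repr_symm_apply z

theorem toComplex_mk2 (a b : ℝ) : toComplex (mk2 a b) = a + b * Complex.I := by
  simp [toComplex_apply, mk2]

theorem toComplex_rot (β : ℝ) (y : EuclideanSpace ℝ (Fin 2)) :
    toComplex (rot β y) = Complex.exp (β * Complex.I) * toComplex y := by
  rw [rot, toComplex_mk2, toComplex_apply, Complex.exp_mul_I]
  push_cast
  linear_combination (-(Complex.sin β * y 1)) * Complex.I_sq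

theorem toComplex_BSKernel (z : EuclideanSpace ℝ (Fin 2)) :
    toComplex (BSKernel z) = Complex.I / (2 * π) * conj (toComplex z)⁻¹ := by
  have hperp : toComplex (mk2 (-(z 1)) (z 0)) = Complex.I * toComplex z := by
    rw [toComplex_mk2, toComplex_apply]
    push_cast
    linear_combination (-(z 1 : ℂ)) * Complex.I_sq
  have hnorm : ((‖z‖ ^ 2 : ℝ) : ℂ) = toComplex z * conj (toComplex z) := by
    rw [Complex.mul_conj, ← toComplex.norm_map, Complex.normSq_eq_norm_sq]
  rw [BSKernel, map_smul, hperp, Complex.real_smul, map_inv₀]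
  rcases eq_or_ne (toComplex z) 0 with h | h
  · simp [h]
  · push_cast at hnorm ⊢
    rw [hnorm]
    have : conj (toComplex z) ≠ 0 := by simpa using h
    field_simp

theorem toComplex_symKernel {m : ℕ} (hm : 0 < m) {x y : EuclideanSpace ℝ (Fin 2)}
    (hxy : ‖x‖ < ‖y‖) :
    toComplex (symKernel m x y) = Complex.I / (2 * π) *
      conj (toComplex x ^ (m - 1) / (toComplex x ^ m - toComplex y ^ m)) := by
  set ζ := Complex.exp (2 * π * Complex.I / m)
  have hζ : IsPrimitiveRoot ζ m := Complex.isPrimitiveRoot_exp m hm.ne'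
  have hrot : ∀ i : ℕ, toComplex (rot (2 * π * i / m) y) = ζ ^ i * toComplex y := by
    intro i
    rw [toComplex_rot, ← Complex.exp_nat_mul]
    congr 2
    push_cast
    ring
  have hpow : toComplex x ^ m ≠ toComplex y ^ m := by
    apply_fun (‖·‖)
    simp only [norm_pow, LinearIsometryEquiv.norm_map]
    exact (pow_lt_pow_left₀ hxy (norm_nonneg x) hm.ne').ne
  have hsum := hζ.sum_inv_sub_pow_mul hpow
  rw [← sum_Icc_one_eq_sum_range (by simp [hζ.pow_eq_one])] at hsum
  have hm' : (m : ℂ) ≠ 0 := Nat.cast_ne_zero.mpr hm.ne'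
  rw [symKernel, map_smul, map_sum]
  simp only [toComplex_BSKernel, toComplex.map_sub, hrot, ← mul_sum, ← map_sum, hsum]
  rw [Complex.real_smul, mul_div_assoc, map_mul, map_natCast, mul_left_comm, Complex.ofReal_inv,
    Complex.ofReal_natCast, inv_mul_cancel_left₀ hm']

theorem norm_symKernel_sub_symKernel {m : ℕ} (hm : 0 < m) {x y y' : EuclideanSpace ℝ (Fin 2)}
    (hxy : ‖x‖ < ‖y‖) (hxy' : ‖x‖ < ‖y'‖) :
    ‖symKernel m x y - symKernel m x y'‖ =
      ‖toComplex x ^ (m - 1) / (toComplex x ^ m - toComplex y ^ m)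
        - toComplex x ^ (m - 1) / (toComplex x ^ m - toComplex y' ^ m)‖ / (2 * π) := by
  rw [← toComplex.norm_map, map_sub, toComplex_symKernel hm hxy, toComplex_symKernel hm hxy',
    ← mul_sub, ← map_sub, norm_mul, Complex.norm_conj, norm_div, Complex.norm_I]
  norm_cast
  rw [Real.norm_of_nonneg (by positivity)]
  ring

/-- Lipschitz-type decay of the `m`-fold symmetrized Biot–Savart kernel in the second
variable: for `m ≥ 3` there is `C_m > 0` such that for `|y|, |y'| ≥ 2|x|`, `|y| ≤ |y'|`
and `|y − y'| ≥ |x|`, one has `|K^{(m)}(x,y) − K^{(m)}(x,y')| ≤ C_m |y−y'| |x|^{m−1}/|y|^{m+1}`. -/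
theorem symKernel_diff_decay (m : ℕ) (hm : 3 ≤ m) :
    ∃ C : ℝ, 0 < C ∧ ∀ x y y' : EuclideanSpace ℝ (Fin 2), y ≠ 0 →
      2 * ‖x‖ ≤ ‖y‖ → 2 * ‖x‖ ≤ ‖y'‖ → ‖y‖ ≤ ‖y'‖ → ‖x‖ ≤ ‖y - y'‖ →
      ‖symKernel m x y - symKernel m x y'‖ ≤ C * ‖y - y'‖ * ‖x‖ ^ (m - 1) / ‖y‖ ^ (m + 1) := by
  refine ⟨2 * m / π, by positivity, fun x y y' hy h2x _ hyy' _ => ?_⟩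
  have hm0 : 0 < m := by omega
  have hxy : ‖x‖ < ‖y‖ := by linarith [norm_pos_iff.mpr hy, norm_nonneg x]
  have hbound := norm_pow_div_sub_pow_sub_le (a := toComplex x) (b := toComplex y)
    (b' := toComplex y') hm0 (by simpa using hy) (by simpa) (by simpa)
  rw [← map_sub, LinearIsometryEquiv.norm_map, LinearIsometryEquiv.norm_map,
    LinearIsometryEquiv.norm_map] at hbound
  rw [norm_symKernel_sub_symKernel hm0 hxy (hxy.trans_le hyy')]
  calc _ ≤ 4 * m * ‖y - y'‖ * ‖x‖ ^ (m - 1) / ‖y‖ ^ (m + 1) / (2 * π) := by gcongr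
    _ = 2 * m / π * ‖y - y'‖ * ‖x‖ ^ (m - 1) / ‖y‖ ^ (m + 1) := by
        field_simp
        ring
end
end

section
/- Let 0 < α < 1 and let f, g : ℝ² → ℝ satisfy: ‖f‖_{C̊^{0,α}} := sup_x |f(x)| + sup_{x ≠ x'} | |x|^α f(x) − |x'|^α f(x') | / |x − x'|^α < ∞; ‖g‖_{C^α} := sup_x |g(x)| + sup_{x ≠ x'} |g(x) − g(x')| / |x − x'|^α < ∞; and g(0) = 0. Then there exists a constant C > 0, depending only on α, such that ‖f·g‖_{C^α} ≤ C · ‖f‖_{C̊^{0,α}} · ‖g‖_{C^α}, where f·g denotes the pointwise product. -/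
open Real MeasureTheory
open scoped ENNReal

noncomputable section

/-- The sup-norm `sup_x |f x|`, valued in `ℝ≥0∞`. -/
def supNorm (f : EuclideanSpace ℝ (Fin 2) → ℝ) : ℝ≥0∞ :=
  ⨆ x : EuclideanSpace ℝ (Fin 2), (‖f x‖₊ : ℝ≥0∞)

/-- The scale-invariant weighted Hölder seminorm. -/
def ringSemi (α : ℝ) (f : EuclideanSpace ℝ (Fin 2) → ℝ) : ℝ≥0∞ :=
  ⨆ (x : EuclideanSpace ℝ (Fin 2)) (x' : EuclideanSpace ℝ (Fin 2)) (_ : x ≠ x'),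
    (‖(‖x‖ ^ α) * f x - (‖x'‖ ^ α) * f x'‖₊ : ℝ≥0∞) / ENNReal.ofReal (‖x - x'‖ ^ α)

/-- The norm `‖f‖_{C̊^{0,α}}`. -/
def ringNorm (α : ℝ) (f : EuclideanSpace ℝ (Fin 2) → ℝ) : ℝ≥0∞ :=
  supNorm f + ringSemi α f

/-- The usual Hölder seminorm `sup_{x ≠ x'} |g(x) − g(x')| / |x − x'|^α`. -/
def holderSemi (α : ℝ) (g : EuclideanSpace ℝ (Fin 2) → ℝ) : ℝ≥0∞ :=
  ⨆ (x : EuclideanSpace ℝ (Fin 2)) (x' : EuclideanSpace ℝ (Fin 2)) (_ : x ≠ x'),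
    (‖g x - g x'‖₊ : ℝ≥0∞) / ENNReal.ofReal (‖x - x'‖ ^ α)

/-- The usual bounded Hölder norm `‖g‖_{C^α}`. -/
def holderNorm (α : ℝ) (g : EuclideanSpace ℝ (Fin 2) → ℝ) : ℝ≥0∞ :=
  supNorm g + holderSemi α g

/-! Since `g(0) = 0`, the Hölder bound for `g` between `x'` and `0` gives `|g(x')| ≤ [g]_α |x'|^α`.
This weight is exactly what the weighted seminorm of `f` controls: writing
`|x'|^α (f(x) − f(x')) = (|x'|^α − |x|^α) f(x) + (|x|^α f(x) − |x'|^α f(x'))` and using that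
`t ↦ t^α` is `α`-Hölder on `[0, ∞)`, one gets `|g(x')| |f(x) − f(x')| ≤ [g]_α (‖f‖_∞ + [f]) |x − x'|^α`.
Together with the Leibniz splitting `fg(x) − fg(x') = f(x) (g(x) − g(x')) + g(x') (f(x) − f(x'))`
this bounds `[fg]_α` by `(2 ‖f‖_∞ + [f]) [g]_α`, and `‖fg‖_∞ ≤ ‖f‖_∞ ‖g‖_∞`, so `C = 3` works. -/

section RpowHolder

variable {α : ℝ}

lemma abs_rpow_sub_rpow_le {a b : ℝ} (ha : 0 ≤ a) (hb : 0 ≤ b) (hα0 : 0 ≤ α) (hα1 : α ≤ 1) :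
    |a ^ α - b ^ α| ≤ |a - b| ^ α := by
  wlog hba : b ≤ a generalizing a b
  · rw [abs_sub_comm, abs_sub_comm a b]
    exact this hb ha (le_of_not_ge hba)
  have hsub := Real.rpow_add_le_add_rpow (sub_nonneg.2 hba) hb hα0 hα1
  rw [sub_add_cancel] at hsub
  rw [abs_of_nonneg (sub_nonneg.2 (Real.rpow_le_rpow hb hba hα0)),
    abs_of_nonneg (sub_nonneg.2 hba)]
  linarith

variable {E : Type*} [SeminormedAddCommGroup E]

lemma abs_norm_rpow_sub_norm_rpow_le (hα0 : 0 ≤ α) (hα1 : α ≤ 1) (x y : E) :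
    |‖x‖ ^ α - ‖y‖ ^ α| ≤ ‖x - y‖ ^ α :=
  (abs_rpow_sub_rpow_le (norm_nonneg x) (norm_nonneg y) hα0 hα1).trans
    (Real.rpow_le_rpow (abs_nonneg _) (abs_norm_sub_norm_le x y) hα0)

lemma norm_rpow_mul_abs_sub_le (hα0 : 0 ≤ α) (hα1 : α ≤ 1) (x x' : E) (a b : ℝ) :
    ‖x'‖ ^ α * |a - b| ≤ |‖x‖ ^ α * a - ‖x'‖ ^ α * b| + |a| * ‖x - x'‖ ^ α := by
  have hweight : ‖x'‖ ^ α * |a - b| = |‖x'‖ ^ α * (a - b)| := by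
    rw [abs_mul, abs_of_nonneg (Real.rpow_nonneg (norm_nonneg x') α)]
  calc ‖x'‖ ^ α * |a - b|
      = |(‖x'‖ ^ α - ‖x‖ ^ α) * a + (‖x‖ ^ α * a - ‖x'‖ ^ α * b)| := by
        rw [hweight]; ring_nf
    _ ≤ |‖x'‖ ^ α - ‖x‖ ^ α| * |a| + |‖x‖ ^ α * a - ‖x'‖ ^ α * b| := by
        rw [← abs_mul]; exact abs_add_le _ _
    _ ≤ ‖x' - x‖ ^ α * |a| + |‖x‖ ^ α * a - ‖x'‖ ^ α * b| := by
        gcongr; exact abs_norm_rpow_sub_norm_rpow_le hα0 hα1 x' x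
    _ = |‖x‖ ^ α * a - ‖x'‖ ^ α * b| + |a| * ‖x - x'‖ ^ α := by
        rw [norm_sub_rev]; ring

lemma ofReal_norm_rpow_mul_enorm_sub_le (hα0 : 0 ≤ α) (hα1 : α ≤ 1) (x x' : E) (a b : ℝ) :
    ENNReal.ofReal (‖x'‖ ^ α) * ‖a - b‖ₑ ≤
      ‖‖x‖ ^ α * a - ‖x'‖ ^ α * b‖ₑ + ‖a‖ₑ * ENNReal.ofReal (‖x - x'‖ ^ α) := by
  simp only [← ofReal_norm, Real.norm_eq_abs]
  rw [← ENNReal.ofReal_mul (by positivity), ← ENNReal.ofReal_mul (abs_nonneg a),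
    ← ENNReal.ofReal_add (abs_nonneg _) (by positivity)]
  exact ENNReal.ofReal_le_ofReal (norm_rpow_mul_abs_sub_le hα0 hα1 x x' a b)

end RpowHolder

section HolderQuotSup

variable {E : Type*} [NormedAddCommGroup E] {α : ℝ}

-- `holderSemi` and `ringSemi` are both `holderQuotSup` of a pointwise quantity, by `rfl`.
def holderQuotSup (α : ℝ) (N : E → E → ℝ≥0∞) : ℝ≥0∞ :=
  ⨆ (x : E) (x' : E) (_ : x ≠ x'), N x x' / ENNReal.ofReal (‖x - x'‖ ^ α)

lemma le_holderQuotSup_mul {N : E → E → ℝ≥0∞} {x x' : E} (hne : x ≠ x') :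
    N x x' ≤ holderQuotSup α N * ENNReal.ofReal (‖x - x'‖ ^ α) := by
  have hdist : ENNReal.ofReal (‖x - x'‖ ^ α) ≠ 0 :=
    (ENNReal.ofReal_pos.2 (Real.rpow_pos_of_pos (norm_pos_iff.2 (sub_ne_zero.2 hne)) α)).ne'
  refine (ENNReal.div_le_iff hdist ENNReal.ofReal_ne_top).1 ?_
  exact le_iSup_of_le x <| le_iSup_of_le x' <| le_iSup_of_le hne le_rfl

lemma holderQuotSup_le {N : E → E → ℝ≥0∞} {K : ℝ≥0∞}
    (h : ∀ x x', x ≠ x' → N x x' ≤ K * ENNReal.ofReal (‖x - x'‖ ^ α)) :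
    holderQuotSup α N ≤ K :=
  iSup₂_le fun x x' => iSup_le fun hne => ENNReal.div_le_of_le_mul (h x x' hne)

end HolderQuotSup

section Plane

variable {α : ℝ} (f g : EuclideanSpace ℝ (Fin 2) → ℝ)

lemma enorm_le_supNorm (x : EuclideanSpace ℝ (Fin 2)) : ‖f x‖ₑ ≤ supNorm f :=
  le_iSup (fun x => (‖f x‖₊ : ℝ≥0∞)) x

lemma supNorm_mul_le : supNorm (fun x => f x * g x) ≤ supNorm f * supNorm g :=
  iSup_le fun x => by
    rw [← enorm_eq_nnnorm, enorm_mul]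
    exact mul_le_mul' (enorm_le_supNorm f x) (enorm_le_supNorm g x)

lemma enorm_sub_le_holderSemi_mul {x x' : EuclideanSpace ℝ (Fin 2)} (hne : x ≠ x') :
    ‖g x - g x'‖ₑ ≤ holderSemi α g * ENNReal.ofReal (‖x - x'‖ ^ α) :=
  le_holderQuotSup_mul hne

lemma enorm_rpow_mul_sub_le_ringSemi_mul {x x' : EuclideanSpace ℝ (Fin 2)} (hne : x ≠ x') :
    ‖‖x‖ ^ α * f x - ‖x'‖ ^ α * f x'‖ₑ ≤ ringSemi α f * ENNReal.ofReal (‖x - x'‖ ^ α) :=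
  le_holderQuotSup_mul hne

variable {f g}

lemma enorm_le_holderSemi_mul_rpow (hg0 : g 0 = 0) (x : EuclideanSpace ℝ (Fin 2)) :
    ‖g x‖ₑ ≤ holderSemi α g * ENNReal.ofReal (‖x‖ ^ α) := by
  rcases eq_or_ne x 0 with rfl | hx
  · simp [hg0]
  · simpa [hg0] using enorm_sub_le_holderSemi_mul g hx

lemma holderSemi_mul_le (hα0 : 0 ≤ α) (hα1 : α ≤ 1) (hg0 : g 0 = 0) :
    holderSemi α (fun x => f x * g x) ≤ (2 * supNorm f + ringSemi α f) * holderSemi α g := by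
  refine holderQuotSup_le fun x x' hne => ?_
  set D := ENNReal.ofReal (‖x - x'‖ ^ α)
  have hweighted : ENNReal.ofReal (‖x'‖ ^ α) * ‖f x - f x'‖ₑ ≤ (ringSemi α f + supNorm f) * D :=
    calc ENNReal.ofReal (‖x'‖ ^ α) * ‖f x - f x'‖ₑ
        ≤ ‖‖x‖ ^ α * f x - ‖x'‖ ^ α * f x'‖ₑ + ‖f x‖ₑ * D :=
          ofReal_norm_rpow_mul_enorm_sub_le hα0 hα1 x x' (f x) (f x')
      _ ≤ ringSemi α f * D + supNorm f * D := by
          gcongr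
          exacts [enorm_rpow_mul_sub_le_ringSemi_mul f hne, enorm_le_supNorm f x]
      _ = (ringSemi α f + supNorm f) * D := (add_mul _ _ _).symm
  calc ‖f x * g x - f x' * g x'‖ₑ
      = ‖f x * (g x - g x') + g x' * (f x - f x')‖ₑ := by ring_nf
    _ ≤ ‖f x‖ₑ * ‖g x - g x'‖ₑ + ‖g x'‖ₑ * ‖f x - f x'‖ₑ := by
        rw [← enorm_mul, ← enorm_mul]; exact enorm_add_le _ _
    _ ≤ supNorm f * (holderSemi α g * D) +
          holderSemi α g * ENNReal.ofReal (‖x'‖ ^ α) * ‖f x - f x'‖ₑ := by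
        gcongr
        exacts [enorm_le_supNorm f x, enorm_sub_le_holderSemi_mul g hne,
          enorm_le_holderSemi_mul_rpow hg0 x']
    _ ≤ supNorm f * (holderSemi α g * D) + holderSemi α g * ((ringSemi α f + supNorm f) * D) := by
        rw [mul_assoc]; gcongr
    _ = (2 * supNorm f + ringSemi α f) * holderSemi α g * D := by ring

end Plane

/-- Product rule in the scale-invariant Hölder spaces: if `f ∈ C̊^{0,α}` and `g ∈ C^α`
with `g(0) = 0`, then `‖fg‖_{C^α} ≤ C ‖f‖_{C̊^{0,α}} ‖g‖_{C^α}`. -/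
theorem ring_holder_product (α : ℝ) (hα0 : 0 < α) (hα1 : α < 1) :
    ∃ C : ℝ, 0 < C ∧ ∀ f g : EuclideanSpace ℝ (Fin 2) → ℝ,
      ringNorm α f ≠ ⊤ → holderNorm α g ≠ ⊤ → g 0 = 0 →
      holderNorm α (fun x => f x * g x) ≤
        ENNReal.ofReal C * ringNorm α f * holderNorm α g := by
  refine ⟨3, three_pos, fun f g _ _ hg0 => ?_⟩
  set A := supNorm f
  set B := ringSemi α f
  set S := supNorm g
  set H := holderSemi α g
  have hH : (2 * A + B) * H ≤ 2 * ((A + B) * (S + H)) := by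
    rw [← mul_assoc, mul_add 2 A B]
    gcongr
    exacts [le_mul_of_one_le_left bot_le one_le_two, le_add_self]
  calc holderNorm α (fun x => f x * g x)
      = supNorm (fun x => f x * g x) + holderSemi α (fun x => f x * g x) := rfl
    _ ≤ A * S + (2 * A + B) * H :=
        add_le_add (supNorm_mul_le f g) (holderSemi_mul_le hα0.le hα1.le hg0)
    _ ≤ (A + B) * (S + H) + 2 * ((A + B) * (S + H)) :=
        add_le_add (mul_le_mul' le_self_add le_self_add) hH
    _ = 3 * ((A + B) * (S + H)) := by ring
    _ = ENNReal.ofReal 3 * ringNorm α f * holderNorm α g := by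
        rw [ENNReal.ofReal_ofNat, mul_assoc]; rfl
end
end
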